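/- Let n ≥ 1, T ≥ 1, let W be an n×n real matrix, let ε, 𝓛, c₁,…,c_n be real numbers with 𝓛 ≥ 0, let φ : ℝ → ℝ be continuous with |φ(u) − φ(v)| ≤ 𝓛·|u − v| for all u, v, and let τ_{ij} ∈ {0, 1, …, T−1} for all i, j. If |1 − ε| + 𝓛·ρ(|W|) < 1, then there exists x̃ ∈ ℝⁿ with x̃_j = (1 − ε)·x̃_j + Σ_{i=1}^n W_{ij}·φ(x̃_i) + c_j for all j, such that every sequence u : ℕ → ℝⁿ satisfying u(k+T)_j = (1 − ε)·u(k+T−1−τ_{jj})_j + Σ_{i=1}^n W_{ij}·φ(u(k+T−1−τ_{ij})_i) + c_j for all k ≥ 0 and all j converges to x̃. -/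

import Mathlib

/-!
Pick `r > ρ(|W|)` with `q := |1 - ε| + 𝓛 r < 1`. By Gelfand's formula some power of `|W|ᵀ` has
row sums below `r ^ K`, and a truncated Neumann series then gives a positive weight `ξ` with
`∑ i, |W i j| ξ i < r ξ j`. In the weighted sup-norm `max_j |x_j| / ξ_j` every coordinate update
of the network is a `q`-contraction, whichever delayed states it reads. So the undelayed map has a
fixed point `p` (Banach), and along an orbit the weighted distance to `p` over each window of `T`
consecutive steps shrinks by the factor `q`, hence decays like `q ^ (k / T)`.
-/

open Filter

/-- The spectral radius of a real square matrix: the supremum of the absolute values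
of its complex eigenvalues. -/
noncomputable def specRad {n : ℕ} (A : Matrix (Fin n) (Fin n) ℝ) : ℝ :=
  sSup ((fun (μ : ℂ) => ‖μ‖) '' spectrum ℂ (A.map (fun x => (x : ℂ))))

open Matrix Finset Topology

theorem specRad_nonneg {n : ℕ} (A : Matrix (Fin n) (Fin n) ℝ) : 0 ≤ specRad A :=
  Real.sSup_nonneg <| by rintro _ ⟨μ, -, rfl⟩; exact norm_nonneg μ

theorem spectralRadius_le_ofReal_specRad {n : ℕ} (A : Matrix (Fin n) (Fin n) ℝ) :
    spectralRadius ℂ (A.map (fun x => (x : ℂ))) ≤ ENNReal.ofReal (specRad A) := by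
  refine iSup₂_le fun μ hμ => ?_
  have hbdd := ((finite_spectrum (A.map (fun x => (x : ℂ)))).image fun μ : ℂ => ‖μ‖).bddAbove
  rw [← enorm_eq_nnnorm, ← ofReal_norm]
  exact ENNReal.ofReal_le_ofReal (le_csSup hbdd ⟨μ, hμ, rfl⟩)

theorem Matrix.spectrum_transpose {ι K : Type*} [Fintype ι] [DecidableEq ι] [Field K]
    (A : Matrix ι ι K) : spectrum K Aᵀ = spectrum K A := by
  ext μ
  rw [mem_spectrum_iff_isRoot_charpoly, mem_spectrum_iff_isRoot_charpoly, charpoly_transpose]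

theorem eventually_norm_pow_lt_pow_of_spectralRadius_lt {A : Type*} [NormedRing A]
    [NormedAlgebra ℂ A] [CompleteSpace A] {a : A} {r : ℝ}
    (h : spectralRadius ℂ a < ENNReal.ofReal r) : ∀ᶠ K : ℕ in atTop, ‖a ^ K‖ < r ^ K := by
  have hr : 0 < r := ENNReal.ofReal_pos.1 (pos_of_gt h)
  have gelfand := spectrum.pow_nnnorm_pow_one_div_tendsto_nhds_spectralRadius a
  filter_upwards [gelfand.eventually_lt_const h, eventually_gt_atTop 0] with K hK hK0
  rwa [one_div, ENNReal.rpow_inv_lt_iff (by positivity), ENNReal.rpow_natCast,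
    ← ENNReal.ofReal_pow hr.le, ← enorm_eq_nnnorm, ← ofReal_norm,
    ENNReal.ofReal_lt_ofReal_iff (by positivity)] at hK

theorem Matrix.exists_pos_mulVec_lt_of_sum_pow_lt {ι : Type*} [Fintype ι] [DecidableEq ι]
    {B : Matrix ι ι ℝ} (hB : ∀ i j, 0 ≤ B i j) {r : ℝ} (hr : 0 < r) {K : ℕ}
    (hK : ∀ i, ∑ j, (B ^ K) i j < r ^ K) :
    ∃ ξ : ι → ℝ, (∀ i, 0 < ξ i) ∧ ∀ i, (B *ᵥ ξ) i < r * ξ i := by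
  -- `ξ := S *ᵥ 1` satisfies `(B - r) ξ = (B ^ K - r ^ K) 1 < 0`.
  set S := ∑ k ∈ range K, r ^ (K - 1 - k) • B ^ k
  have hgeom : (B - algebraMap ℝ _ r) * S = B ^ K - algebraMap ℝ _ (r ^ K) := by
    rw [map_pow, ← (Algebra.commute_algebraMap_right r B).mul_geom_sum₂]
    simp only [S, ← map_pow, ← Algebra.commutes, ← Algebra.smul_def]
  refine ⟨S *ᵥ 1, fun i => ?_, fun i => ?_⟩
  · have hK0 : K ≠ 0 := by rintro rfl; simpa [one_apply] using hK i
    have hterm : ∀ k, 0 ≤ (r ^ (K - 1 - k) • B ^ k) *ᵥ (1 : ι → ℝ) := fun k i => by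
      rw [smul_mulVec]
      exact mul_nonneg (by positivity)
        (sum_nonneg fun j _ => mul_nonneg (pow_apply_nonneg hB k i j) zero_le_one)
    have h0 : r ^ (K - 1) • (1 : ι → ℝ) ≤ S *ᵥ 1 := by
      simpa [S, sum_mulVec, smul_mulVec] using
        single_le_sum (fun k _ => hterm k) (mem_range.2 (Nat.pos_of_ne_zero hK0))
    exact (by positivity : 0 < r ^ (K - 1)).trans_le (by simpa using h0 i)
  · have hvec : B *ᵥ (S *ᵥ 1) - r • (S *ᵥ 1) = B ^ K *ᵥ 1 - r ^ K • 1 := by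
      simpa only [← mulVec_mulVec, sub_mulVec, Algebra.algebraMap_eq_smul_one, smul_mulVec,
        one_mulVec] using congrArg (· *ᵥ (1 : ι → ℝ)) hgeom
    have hrow : (B ^ K *ᵥ 1) i < r ^ K := by simpa [mulVec, dotProduct] using hK i
    have := congrFun hvec i
    simp only [Pi.sub_apply, Pi.smul_apply, smul_eq_mul, Pi.one_apply, mul_one] at this
    linarith

section linftyOpNorm

attribute [local instance] Matrix.linftyOpNormedAddCommGroup Matrix.linftyOpNormedRing
  Matrix.linftyOpNormedAlgebra

theorem exists_pos_weight_of_specRad_lt {n : ℕ} {A : Matrix (Fin n) (Fin n) ℝ}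
    (hA : ∀ i j, 0 ≤ A i j) {r : ℝ} (h : specRad A < r) :
    ∃ ξ : Fin n → ℝ, (∀ i, 0 < ξ i) ∧ ∀ j, ∑ i, A i j * ξ i < r * ξ j := by
  have hr : 0 < r := (specRad_nonneg A).trans_lt h
  have : CompleteSpace (Matrix (Fin n) (Fin n) ℂ) := FiniteDimensional.complete ℂ _
  have hsr : spectralRadius ℂ (Aᵀ.map (fun x => (x : ℂ))) < ENNReal.ofReal r := by
    rw [transpose_map, spectralRadius, spectrum_transpose]
    exact (spectralRadius_le_ofReal_specRad A).trans_lt ((ENNReal.ofReal_lt_ofReal_iff hr).2 h)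
  obtain ⟨K, hK⟩ := (eventually_norm_pow_lt_pow_of_spectralRadius_lt hsr).exists
  have hAt : ∀ i j, 0 ≤ Aᵀ i j := fun i j => hA j i
  have hrow : ∀ i, ∑ j, (Aᵀ ^ K) i j < r ^ K := fun i => by
    refine lt_of_le_of_lt ?_ hK
    have hpow : (Aᵀ.map fun x => (x : ℂ)) ^ K = (Aᵀ ^ K).map fun x => (x : ℂ) :=
      (map_pow Complex.ofRealHom.mapMatrix Aᵀ K).symm
    rw [hpow, linfty_opNorm_def]
    calc ∑ j, (Aᵀ ^ K) i j = ((∑ j, ‖((Aᵀ ^ K).map fun x => (x : ℂ)) i j‖₊ : NNReal) : ℝ) := by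
          push_cast
          simp [abs_of_nonneg (pow_apply_nonneg hAt K i _)]
      _ ≤ _ := NNReal.coe_le_coe.2 (le_sup (f := fun i => ∑ j, ‖_‖₊) (mem_univ i))
  obtain ⟨ξ, hξ, hlt⟩ := exists_pos_mulVec_lt_of_sum_pow_lt hAt hr hrow
  exact ⟨ξ, hξ, fun j => by simpa [mulVec, dotProduct] using hlt j⟩

end linftyOpNorm

section WeightedContraction

variable {ι : Type*}

theorem le_geometric_of_delayed_contraction {e : ℕ → ι → ℝ} {ξ : ι → ℝ} (hξ : ∀ i, 0 ≤ ξ i)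
    {T : ℕ} (hT : 0 < T) {q S : ℝ} (hq0 : 0 ≤ q) (hq1 : q ≤ 1) (hS : 0 ≤ S)
    (hinit : ∀ t < T, ∀ i, e t i ≤ S * ξ i)
    (hstep : ∀ k d, 0 ≤ d → (∀ s, k ≤ s → s < k + T → ∀ i, e s i ≤ d * ξ i) →
      ∀ i, e (k + T) i ≤ q * d * ξ i) :
    ∀ k i, e k i ≤ S * q ^ (k / T) * ξ i := by
  intro k
  induction k using Nat.strong_induction_on with
  | _ k ih =>
    rcases lt_or_ge k T with hk | hk
    · simpa [Nat.div_eq_of_lt hk] using hinit k hk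
    obtain ⟨m, rfl⟩ := Nat.exists_eq_add_of_le' hk
    have hwin : ∀ s, m ≤ s → s < m + T → ∀ i, e s i ≤ S * q ^ (m / T) * ξ i :=
      fun s hms hs i => (ih s hs i).trans <| mul_le_mul_of_nonneg_right
        (mul_le_mul_of_nonneg_left (pow_le_pow_of_le_one hq0 hq1 (Nat.div_le_div_right hms)) hS)
        (hξ i)
    intro i
    calc e (m + T) i ≤ q * (S * q ^ (m / T)) * ξ i := hstep m _ (by positivity) hwin i
      _ = S * q ^ ((m + T) / T) * ξ i := by rw [Nat.add_div_right m hT, pow_succ]; ring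

variable [Fintype ι]

theorem abs_affine_comb_sub_le {φ : ℝ → ℝ} {L : ℝ} (hL : 0 ≤ L)
    (hφ : ∀ u v, |φ u - φ v| ≤ L * |u - v|) (a : ℝ) (w : ι → ℝ) {z z' d ζ : ℝ}
    {x y ξ : ι → ℝ} (hz : |z - z'| ≤ d * ζ) (hxy : ∀ i, |x i - y i| ≤ d * ξ i) :
    |(a * z + ∑ i, w i * φ (x i)) - (a * z' + ∑ i, w i * φ (y i))| ≤
      d * (|a| * ζ + L * ∑ i, |w i| * ξ i) := by
  calc |(a * z + ∑ i, w i * φ (x i)) - (a * z' + ∑ i, w i * φ (y i))|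
      = |a * (z - z') + ∑ i, w i * (φ (x i) - φ (y i))| := by
        simp only [mul_sub, sum_sub_distrib]; ring_nf
    _ ≤ |a * (z - z')| + |∑ i, w i * (φ (x i) - φ (y i))| := abs_add_le _ _
    _ ≤ |a| * |z - z'| + ∑ i, |w i| * |φ (x i) - φ (y i)| := by
        rw [abs_mul]
        gcongr
        simpa only [abs_mul] using abs_sum_le_sum_abs (fun i => w i * (φ (x i) - φ (y i))) univ
    _ ≤ |a| * (d * ζ) + ∑ i, |w i| * (L * (d * ξ i)) := by
        gcongr with i
        exact (hφ _ _).trans (by gcongr; exact hxy i)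
    _ = d * (|a| * ζ + L * ∑ i, |w i| * ξ i) := by
        rw [mul_add, mul_sum, mul_sum]
        congr 1
        · ring
        · exact sum_congr rfl fun i _ => by ring

theorem exists_fixedPoint_of_weighted_contraction {f : (ι → ℝ) → ι → ℝ} {ξ : ι → ℝ}
    (hξ : ∀ i, 0 < ξ i) {q : ℝ} (hq0 : 0 ≤ q) (hq1 : q < 1)
    (hf : ∀ x y d, 0 ≤ d → (∀ i, |x i - y i| ≤ d * ξ i) → ∀ j, |f x j - f y j| ≤ q * d * ξ j) :
    ∃ p, f p = p := by
  let g : (ι → ℝ) → ι → ℝ := fun y j => f (ξ * y) j / ξ j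
  have hg : ContractingWith ⟨q, hq0⟩ g := by
    refine ⟨hq1, LipschitzWith.of_dist_le_mul fun y y' => ?_⟩
    refine (dist_pi_le_iff (by positivity)).2 fun j => ?_
    have hd : ∀ i, |(ξ * y) i - (ξ * y') i| ≤ dist y y' * ξ i := fun i => by
      rw [Pi.mul_apply, Pi.mul_apply, ← mul_sub, abs_mul, abs_of_pos (hξ i), mul_comm,
        ← Real.dist_eq]
      exact mul_le_mul_of_nonneg_right (dist_le_pi_dist y y' i) (hξ i).le
    rw [Real.dist_eq, ← sub_div, abs_div, abs_of_pos (hξ j), div_le_iff₀ (hξ j)]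
    exact hf _ _ _ dist_nonneg hd j
  obtain ⟨y, hy⟩ : ∃ y, g y = y := ⟨_, hg.fixedPoint_isFixedPt⟩
  refine ⟨ξ * y, funext fun j => ?_⟩
  have := congrFun hy j
  rw [div_eq_iff (hξ j).ne'] at this
  exact this.trans (mul_comm _ _)

theorem tendsto_of_delayed_contraction {u : ℕ → ι → ℝ} {p ξ : ι → ℝ} (hξ : ∀ i, 0 < ξ i)
    {T : ℕ} (hT : 0 < T) {q : ℝ} (hq0 : 0 ≤ q) (hq1 : q < 1)
    (hstep : ∀ k d, 0 ≤ d → (∀ s, k ≤ s → s < k + T → ∀ i, |u s i - p i| ≤ d * ξ i) →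
      ∀ i, |u (k + T) i - p i| ≤ q * d * ξ i) :
    Tendsto u atTop (𝓝 p) := by
  set S := ∑ t ∈ range T, ∑ i, |u t i - p i| / ξ i
  have hterm : ∀ t i, 0 ≤ |u t i - p i| / ξ i := fun t i => div_nonneg (abs_nonneg _) (hξ i).le
  have hinit : ∀ t < T, ∀ i, |u t i - p i| ≤ S * ξ i := fun t ht i => by
    rw [← div_le_iff₀ (hξ i)]
    exact (single_le_sum (fun i _ => hterm t i) (mem_univ i)).trans
      (single_le_sum (f := fun t => ∑ i, |u t i - p i| / ξ i)
        (fun t _ => sum_nonneg fun i _ => hterm t i) (mem_range.2 ht))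
  have hS : 0 ≤ S := sum_nonneg fun t _ => sum_nonneg fun i _ => hterm t i
  have hbound := le_geometric_of_delayed_contraction (fun i => (hξ i).le) hT hq0 hq1.le hS
    hinit hstep
  refine tendsto_pi_nhds.2 fun i => tendsto_iff_dist_tendsto_zero.2 ?_
  have hlim : Tendsto (fun k => S * q ^ (k / T) * ξ i) atTop (𝓝 0) := by
    simpa using (((tendsto_pow_atTop_nhds_zero_of_lt_one hq0 hq1).comp
      (Nat.tendsto_div_const_atTop hT.ne')).const_mul S).mul_const (ξ i)
  exact squeeze_zero (fun _ => dist_nonneg) (fun k => (Real.dist_eq _ _).trans_le (hbound k i))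
    hlim

theorem abs_cohenGrossberg_update_sub_le {W : Matrix ι ι ℝ} {ε L r d z z' : ℝ} {φ : ℝ → ℝ}
    (c : ι → ℝ) {ξ x y : ι → ℝ} {j : ι} (hL : 0 ≤ L) (hφ : ∀ u v, |φ u - φ v| ≤ L * |u - v|)
    (hW : ∑ i, |W i j| * ξ i ≤ r * ξ j) (hd : 0 ≤ d) (hz : |z - z'| ≤ d * ξ j)
    (hxy : ∀ i, |x i - y i| ≤ d * ξ i) :
    |((1 - ε) * z + ∑ i, W i j * φ (x i) + c j) - ((1 - ε) * z' + ∑ i, W i j * φ (y i) + c j)|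
      ≤ (|1 - ε| + L * r) * d * ξ j := by
  rw [add_sub_add_right_eq_sub]
  calc _ ≤ d * (|1 - ε| * ξ j + L * ∑ i, |W i j| * ξ i) := abs_affine_comb_sub_le hL hφ _ _ hz hxy
    _ ≤ d * (|1 - ε| * ξ j + L * (r * ξ j)) := by gcongr
    _ = (|1 - ε| + L * r) * d * ξ j := by ring

end WeightedContraction

theorem exists_gt_and_add_mul_lt {a L ρ : ℝ} (h : a + L * ρ < 1) :
    ∃ r, ρ < r ∧ a + L * r < 1 := by
  have hev : ∀ᶠ r in 𝓝 ρ, a + L * r < 1 :=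
    (by fun_prop : Continuous fun r => a + L * r).continuousAt.eventually_lt continuousAt_const h
  obtain ⟨r, hr, hρr⟩ := ((hev.filter_mono nhdsWithin_le_nhds).and self_mem_nhdsWithin :
    ∀ᶠ r in 𝓝[>] ρ, _ ∧ ρ < r).exists
  exact ⟨r, hρr, hr⟩

theorem delayed_cohenGrossberg_stability_general
    {n T : ℕ} (hT : 1 ≤ T)
    (W : Matrix (Fin n) (Fin n) ℝ) (ε 𝓛 : ℝ) (c : Fin n → ℝ)
    (φ : ℝ → ℝ)
    (hφ : ∀ u v : ℝ, |φ u - φ v| ≤ 𝓛 * |u - v|)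
    (τ : Fin n → Fin n → ℕ) (hτ : ∀ i j, τ i j ≤ T - 1)
    (hρ : |1 - ε| + 𝓛 * specRad (Matrix.of fun i j => |W i j|) < 1) :
    ∃ p : Fin n → ℝ,
      (∀ j, p j = (1 - ε) * p j + ∑ i, W i j * φ (p i) + c j) ∧
      ∀ u : ℕ → Fin n → ℝ,
        (∀ k, ∀ j, u (k + T) j =
          (1 - ε) * u (k + T - 1 - τ j j) j + ∑ i, W i j * φ (u (k + T - 1 - τ i j) i) + c j) →
        Tendsto u atTop (nhds p) := by
  have h𝓛 : 0 ≤ 𝓛 := (abs_nonneg _).trans (by simpa using hφ 1 0)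
  set A : Matrix (Fin n) (Fin n) ℝ := Matrix.of fun i j => |W i j|
  obtain ⟨r, hρr, hr⟩ := exists_gt_and_add_mul_lt hρ
  obtain ⟨ξ, hξ, hξA⟩ := exists_pos_weight_of_specRad_lt (A := A) (fun _ _ => abs_nonneg _) hρr
  have hq0 : 0 ≤ |1 - ε| + 𝓛 * r := by have := (specRad_nonneg A).trans hρr.le; positivity
  obtain ⟨p, hp⟩ := exists_fixedPoint_of_weighted_contraction hξ hq0 hr
    (f := fun x j => (1 - ε) * x j + ∑ i, W i j * φ (x i) + c j)
    fun x y d hd hxy j => abs_cohenGrossberg_update_sub_le c h𝓛 hφ (hξA j).le hd (hxy j) hxy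
  have hp' : ∀ j, p j = (1 - ε) * p j + ∑ i, W i j * φ (p i) + c j := fun j => (congrFun hp j).symm
  refine ⟨p, hp', fun u hu => tendsto_of_delayed_contraction hξ hT hq0 hr fun k d hd hwin j => ?_⟩
  have hdelay : ∀ i, k ≤ k + T - 1 - τ i j ∧ k + T - 1 - τ i j < k + T := fun i => by
    have := hτ i j; omega
  rw [hu k j, hp' j]
  exact abs_cohenGrossberg_update_sub_le c h𝓛 hφ (hξA j).le hd (hwin _ (hdelay j).1 (hdelay j).2 j)
    fun i => hwin _ (hdelay i).1 (hdelay i).2 i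

/-- Stability of time-delayed Cohen–Grossberg neural networks with non-distributed
delays: if `|1 − ε| + 𝓛·ρ(|W|) < 1` then there is a fixed point `p` to which every
orbit of the delayed network converges. -/
theorem delayed_cohenGrossberg_stability
    {n T : ℕ} (hn : 1 ≤ n) (hT : 1 ≤ T)
    (W : Matrix (Fin n) (Fin n) ℝ) (ε 𝓛 : ℝ) (c : Fin n → ℝ) (h𝓛 : 0 ≤ 𝓛)
    (φ : ℝ → ℝ) (hφc : Continuous φ)
    (hφ : ∀ u v : ℝ, |φ u - φ v| ≤ 𝓛 * |u - v|)
    (τ : Fin n → Fin n → ℕ) (hτ : ∀ i j, τ i j ≤ T - 1)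
    (hρ : |1 - ε| + 𝓛 * specRad (Matrix.of fun i j => |W i j|) < 1) :
    ∃ p : Fin n → ℝ,
      (∀ j, p j = (1 - ε) * p j + ∑ i, W i j * φ (p i) + c j) ∧
      ∀ u : ℕ → Fin n → ℝ,
        (∀ k, ∀ j, u (k + T) j =
          (1 - ε) * u (k + T - 1 - τ j j) j + ∑ i, W i j * φ (u (k + T - 1 - τ i j) i) + c j) →
        Tendsto u atTop (nhds p) :=
  delayed_cohenGrossberg_stability_general hT W ε 𝓛 c φ hφ τ hτ hρ
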